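/- In the algebra E(m,λ), the derived relation α₃α₄α₅α₆ = α₁α₂α₅α₆ + λ(α₁α₂α₅α₆)^m holds, and consequently α₁α₂α₅α₆β₁ = 0. -/
import Mathlib


/-!
The algebra `E(m,λ)` of Skowyrski's "Two tilts of higher spherical algebras",
realized as the quotient of the path algebra of the quiver `Q_E` by the
relations (E1)-(E8).  Vertices `1,…,6` are encoded as `0,…,5 : Fin 6`.
The path algebra is presented as the free algebra on the trivial paths
(idempotents) and the arrows, modulo the path-algebra relations
(orthogonal idempotents summing to `1`, source/target compatibility)
and the relations (E1)-(E8).  Paths compose left to right.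
-/

namespace TwoTiltsE

/-- Arrows of `Q_E`: α₁:1→2, α₂:2→3, α₃:1→6, α₄:6→3, α₅:3→4, α₆:4→1,
β₁:1→5, β₂:5→3, γ₀:3→1. -/
inductive EArr | a1 | a2 | a3 | a4 | a5 | a6 | b1 | b2 | g0

/-- Source vertex of an arrow. -/
def EArr.src : EArr → Fin 6
  | .a1 => 0 | .a2 => 1 | .a3 => 0 | .a4 => 5 | .a5 => 2
  | .a6 => 3 | .b1 => 0 | .b2 => 4 | .g0 => 2

/-- Target vertex of an arrow. -/
def EArr.tgt : EArr → Fin 6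
  | .a1 => 1 | .a2 => 2 | .a3 => 5 | .a4 => 2 | .a5 => 3
  | .a6 => 0 | .b1 => 4 | .b2 => 2 | .g0 => 0

/-- `EPath c i j` : the list of arrows `c` is a path from vertex `i` to
vertex `j` in `Q_E` (consecutive arrows composable, left to right). -/
def EPath : List EArr → Fin 6 → Fin 6 → Prop
  | [], i, j => i = j
  | a :: c, i, j => a.src = i ∧ EPath c a.tgt j

/-- The free algebra on trivial paths and arrows of `Q_E`. -/
abbrev EFree (K : Type*) [Field K] := FreeAlgebra K (Fin 6 ⊕ EArr)

variable {K : Type*} [Field K]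

/-- Trivial path at vertex `i`. -/
def fe (i : Fin 6) : EFree K := FreeAlgebra.ι K (Sum.inl i)
/-- The arrow `a` as an element of the free algebra. -/
def fa (a : EArr) : EFree K := FreeAlgebra.ι K (Sum.inr a)
/-- The product of a list of arrows in the free algebra. -/
def pathProd (c : List EArr) : EFree K := (c.map fa).prod

def A1 : EFree K := fa .a1
def A2 : EFree K := fa .a2
def A3 : EFree K := fa .a3
def A4 : EFree K := fa .a4
def A5 : EFree K := fa .a5
def A6 : EFree K := fa .a6
def B1 : EFree K := fa .b1
def B2 : EFree K := fa .b2
def G0 : EFree K := fa .g0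

/-- The defining relations of `E(m,λ)`: path algebra relations together
with (E1)-(E8). -/
inductive ERel (K : Type*) [Field K] (m : ℕ) (l : K) : EFree K → EFree K → Prop
  | orth (i j : Fin 6) : ERel K m l (fe i * fe j) (if i = j then fe i else 0)
  | total : ERel K m l (∑ i, fe i) 1
  | src (a : EArr) : ERel K m l (fe a.src * fa a) (fa a)
  | tgt (a : EArr) : ERel K m l (fa a * fe a.tgt) (fa a)
  | E1 : ERel K m l (A1 * A2 - A3 * A4 + B1 * B2) 0
  | E2 : ERel K m l (A3 * A4 * A5)
      (A1 * A2 * A5 + l • ((A1 * A2 * A5 * A6) ^ (m - 1) * (A1 * A2 * A5)))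
  | E3a : ERel K m l (G0 * B1) 0
  | E3b : ERel K m l (G0 * A3) (A5 * A6 * A3)
  | E3c : ERel K m l (G0 * A1)
      (A5 * A6 * A1 + l • ((A5 * A6 * A1 * A2) ^ (m - 1) * (A5 * A6 * A1)))
  | E4a : ERel K m l (A2 * G0)
      (A2 * A5 * A6 + l • ((A2 * A5 * A6 * A1) ^ (m - 1) * (A2 * A5 * A6)))
  | E4b : ERel K m l ((A2 * A5 * A6 * A1) ^ (m - 1) * (A2 * A5 * A6 * A3)) 0
  | E5a : ERel K m l (A4 * G0) (A4 * A5 * A6)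
  | E5b : ERel K m l (A4 * A5 * A6 * A1 * (A2 * A5 * A6 * A1) ^ (m - 1)) 0
  | E6 : ERel K m l (A6 * A3 * A4)
      (A6 * A1 * A2 + l • ((A6 * A1 * A2 * A5) ^ (m - 1) * (A6 * A1 * A2)))
  | E7a : ERel K m l (B2 * G0) 0
  | E7b : ERel K m l (B2 * A5 * A6 * A1) 0
  | E7c : ERel K m l (B2 * A5 * A6 * A3) 0
  | E7d : ERel K m l (B2 * A5 * A6 * B1 * B2) 0
  | E8l (i : Fin 6) (c : List EArr) (hc : EPath c i i)
      (hlen : c.length = 3 ∨ c.length = 4) (θ : EArr) (hθ : θ.tgt = i) :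
      ERel K m l (fa θ * (pathProd c) ^ m) 0
  | E8r (i : Fin 6) (c : List EArr) (hc : EPath c i i)
      (hlen : c.length = 3 ∨ c.length = 4) (φ : EArr) (hφ : φ.src = i) :
      ERel K m l ((pathProd c) ^ m * fa φ) 0

/-- The algebra `E(m,λ)`. -/
abbrev EAlg (K : Type*) [Field K] (m : ℕ) (l : K) := RingQuot (ERel K m l)

/-- The canonical projection onto `E(m,λ)`. -/
noncomputable def eq' (K : Type*) [Field K] (m : ℕ) (l : K) :
    EFree K →ₐ[K] EAlg K m l := RingQuot.mkAlgHom K (ERel K m l)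

end TwoTiltsE

open TwoTiltsE in
/-- In the algebra `E(m,λ)`, the derived relation
`α₃α₄α₅α₆ = α₁α₂α₅α₆ + λ(α₁α₂α₅α₆)^m` holds, and consequently
`α₁α₂α₅α₆β₁ = 0`. -/
theorem E_derived_rel (K : Type*) [Field K] (m : ℕ) (hm : 2 ≤ m)
    (l : K) (hl : l ≠ 0) :
    eq' K m l (A3 * A4 * A5 * A6) =
      eq' K m l (A1 * A2 * A5 * A6) + l • eq' K m l ((A1 * A2 * A5 * A6) ^ m) ∧
    eq' K m l (A1 * A2 * A5 * A6 * B1) = 0 := by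
  have rel : ∀ {a b : EFree K}, ERel K m l a b → eq' K m l a = eq' K m l b :=
    fun h => RingQuot.mkAlgHom_rel K h
  set q : EFree K →ₐ[K] EAlg K m l := eq' K m l with hq
  have hE2 := rel (ERel.E2 (K := K) (m := m) (l := l))
  have hE4a := rel (ERel.E4a (K := K) (m := m) (l := l))
  have hE3a := rel (ERel.E3a (K := K) (m := m) (l := l))
  have h8 := rel (ERel.E8r (K := K) (m := m) (l := l) 1 [.a2, .a5, .a6, .a1]
      ⟨rfl, rfl, rfl, rfl, rfl⟩ (Or.inr rfl) .a2 rfl)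
  have hpp : (pathProd [.a2, .a5, .a6, .a1] : EFree K) = A2 * A5 * A6 * A1 := by
    simp [pathProd, A2, A5, A6, A1, mul_assoc]
  rw [hpp, show (fa .a2 : EFree K) = A2 from rfl] at h8
  simp only [map_mul, map_add, map_smul, map_pow, map_zero] at hE2 hE4a hE3a h8 ⊢
  set a1 := q A1; set a2 := q A2; set a3 := q A3; set a4 := q A4
  set a5 := q A5; set a6 := q A6; set b1 := q B1; set g0 := q G0
  constructor
  · calc a3 * a4 * a5 * a6
        = (a1 * a2 * a5 + l • ((a1*a2*a5*a6)^(m-1) * (a1*a2*a5))) * a6 := by rw [hE2]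
      _ = a1*a2*a5*a6 + l • ((a1*a2*a5*a6)^(m-1) * (a1*a2*a5*a6)) := by
          rw [add_mul, smul_mul_assoc, mul_assoc ((a1*a2*a5*a6)^(m-1))]
      _ = a1*a2*a5*a6 + l • (a1*a2*a5*a6)^m := by
          rw [← pow_succ, Nat.sub_add_cancel (by omega)]
  · have ht' : a2*a5*a6*b1 + l • ((a2*a5*a6*a1)^(m-1) * (a2*a5*a6*b1)) = 0 := by
      calc a2*a5*a6*b1 + l • ((a2*a5*a6*a1)^(m-1) * (a2*a5*a6*b1))
          = (a2*a5*a6 + l • ((a2*a5*a6*a1)^(m-1) * (a2*a5*a6))) * b1 := by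
            rw [add_mul, smul_mul_assoc, mul_assoc ((a2*a5*a6*a1)^(m-1))]
        _ = (a2*g0)*b1 := by rw [← hE4a]
        _ = 0 := by rw [mul_assoc, hE3a, mul_zero]
    have hXmt : (a2*a5*a6*a1)^m * (a2*a5*a6*b1) = 0 := by
      have hre : a2*a5*a6*b1 = a2*(a5*(a6*b1)) := by rw [mul_assoc, mul_assoc]
      rw [hre, ← mul_assoc, h8, zero_mul]
    have h2 : (a2*a5*a6*a1)^(m-1) * ((a2*a5*a6*a1)^(m-1) * (a2*a5*a6*b1))
        = (a2*a5*a6*a1)^(m-2) * ((a2*a5*a6*a1)^m * (a2*a5*a6*b1)) := by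
      rw [← mul_assoc, ← pow_add, show (m-1)+(m-1) = (m-2)+m from by omega,
        pow_add, mul_assoc ((a2*a5*a6*a1)^(m-2))]
    have hmul := congrArg (fun z => (a2*a5*a6*a1)^(m-1) * z) ht'
    simp only [mul_add, mul_smul_comm, mul_zero] at hmul
    rw [h2, hXmt, mul_zero, smul_zero, add_zero] at hmul
    rw [hmul, smul_zero, add_zero] at ht'
    simp only [mul_assoc] at ht' ⊢
    rw [ht', mul_zero]
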